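/- Let J be a symmetric positive-definite real 3×3 matrix, k_Ω > 0, let Ω^d : ℝ → ℝ³ be differentiable, e : ℝ → ℝ³ be continuous, and let Ω : ℝ → ℝ³ be differentiable satisfying the rigid-body attitude dynamics J Ω̇ + Ω × (JΩ) = u with the feedback control u = −e − k_Ω e_Ω + Ω̂^d J(e_Ω + Ω^d) + J Ω̇^d, where e_Ω = Ω − Ω^d. Then the tracking error satisfies the closed-loop dynamics J ė_Ω = (J e_Ω + J Ω^d) × e_Ω − e − k_Ω e_Ω. -/

import Mathlib

noncomputable section
open Matrix

/-- Vectors in ℝ³ with the Euclidean norm. -/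
abbrev V3 : Type := EuclideanSpace ℝ (Fin 3)

/-- Real 3×3 matrices. -/
abbrev M3 : Type := Matrix (Fin 3) (Fin 3) ℝ

/-- The special orthogonal group SO(3): RᵀR = I and det R = 1. -/
def SO3 (R : M3) : Prop := Rᵀ * R = 1 ∧ R.det = 1

/-- Action of a matrix on a vector. -/
def matVec (A : M3) (v : V3) : V3 := WithLp.toLp 2 (A.mulVec v)

/-- Cross product on ℝ³. -/
def cross3 (u v : V3) : V3 :=
  WithLp.toLp 2 ![u 1 * v 2 - u 2 * v 1, u 2 * v 0 - u 0 * v 2, u 0 * v 1 - u 1 * v 0]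

/-- The hat map: x̂ y = x × y. -/
def hat (x : V3) : M3 :=
  !![0, -x 2, x 1; x 2, 0, -x 0; -x 1, x 0, 0]

/-- The vee map, inverse of the hat map on skew-symmetric matrices. -/
def vee (A : M3) : V3 := WithLp.toLp 2 ![A 2 1, A 0 2, A 1 0]

/-- Dot product on ℝ³. -/
def dot3 (u v : V3) : ℝ := u 0 * v 0 + u 1 * v 1 + u 2 * v 2

attribute [local instance] Matrix.normedAddCommGroup Matrix.normedSpace

/-! Since `eΩ + Ωd = Ω`, the feedforward term `Ω̂d (JΩ)` and the gyroscopic term `-Ω × JΩ` of the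
dynamics combine into `(JΩ) × eΩ`; everything else is linearity of `J`. -/

lemma cross3_eq_crossProduct (u v : V3) :
    cross3 u v = WithLp.toLp 2 (u.ofLp ⨯₃ v.ofLp) := by
  ext i; fin_cases i <;> simp [cross3, cross_apply]

lemma cross3_sub_right (u v w : V3) : cross3 u (v - w) = cross3 u v - cross3 u w := by
  simp only [cross3_eq_crossProduct, WithLp.ofLp_sub, LinearMap.map_sub, WithLp.toLp_sub]

lemma cross3_anticomm (u v : V3) : cross3 v u = -cross3 u v := by
  rw [cross3_eq_crossProduct, cross3_eq_crossProduct, ← cross_anticomm, WithLp.toLp_neg]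

lemma matVec_add (A : M3) (v w : V3) : matVec A (v + w) = matVec A v + matVec A w := by
  simp only [matVec, WithLp.ofLp_add, mulVec_add, WithLp.toLp_add]

lemma matVec_sub (A : M3) (v w : V3) : matVec A (v - w) = matVec A v - matVec A w := by
  simp only [matVec, WithLp.ofLp_sub, mulVec_sub, WithLp.toLp_sub]

lemma matVec_hat (x y : V3) : matVec (hat x) y = cross3 x y := by
  ext i; fin_cases i <;> simp [matVec, hat, cross3, dotProduct, Fin.sum_univ_three] <;> ring

theorem closed_loop_error_dynamics_general
    (J : M3)
    (kΩ : ℝ)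
    (Ωd Ωd' : ℝ → V3)
    (e : ℝ → V3)
    (Ω Ω' : ℝ → V3)
    (eΩ : ℝ → V3) (heΩ : ∀ t, eΩ t = Ω t - Ωd t)
    (u : ℝ → V3)
    (hu : ∀ t, u t = -e t - kΩ • eΩ t
        + matVec (hat (Ωd t)) (matVec J (eΩ t + Ωd t)) + matVec J (Ωd' t))
    (hdyn : ∀ t, matVec J (Ω' t) + cross3 (Ω t) (matVec J (Ω t)) = u t) :
    ∀ t, matVec J (Ω' t - Ωd' t) =
      cross3 (matVec J (eΩ t) + matVec J (Ωd t)) (eΩ t) - e t - kΩ • eΩ t := by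
  intro t
  have hΩ : eΩ t + Ωd t = Ω t := by rw [heΩ]; abel
  have hdyn_t := hdyn t
  rw [hu t, hΩ, matVec_hat] at hdyn_t
  have hgyro : cross3 (matVec J (Ω t)) (eΩ t) =
      cross3 (Ωd t) (matVec J (Ω t)) - cross3 (Ω t) (matVec J (Ω t)) := by
    rw [heΩ, cross3_sub_right, cross3_anticomm (Ω t), cross3_anticomm (Ωd t)]
    abel
  rw [← matVec_add, hΩ, matVec_sub, hgyro]
  linear_combination (norm := module) hdyn_t

/-- closed-loop tracking error dynamics. -/
theorem closed_loop_error_dynamics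
    (J : M3) (hJsym : J.IsSymm) (hJpos : J.PosDef)
    (kΩ : ℝ) (hkΩ : 0 < kΩ)
    (Ωd Ωd' : ℝ → V3) (hΩd : ∀ t, HasDerivAt Ωd (Ωd' t) t)
    (e : ℝ → V3) (he : Continuous e)
    (Ω Ω' : ℝ → V3) (hΩ : ∀ t, HasDerivAt Ω (Ω' t) t)
    (eΩ : ℝ → V3) (heΩ : ∀ t, eΩ t = Ω t - Ωd t)
    (u : ℝ → V3)
    (hu : ∀ t, u t = -e t - kΩ • eΩ t
        + matVec (hat (Ωd t)) (matVec J (eΩ t + Ωd t)) + matVec J (Ωd' t))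
    (hdyn : ∀ t, matVec J (Ω' t) + cross3 (Ω t) (matVec J (Ω t)) = u t) :
    ∀ t, matVec J (Ω' t - Ωd' t) =
      cross3 (matVec J (eΩ t) + matVec J (Ωd t)) (eΩ t) - e t - kΩ • eΩ t :=
  closed_loop_error_dynamics_general J kΩ Ωd Ωd' e Ω Ω' eΩ heΩ u hu hdyn
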